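/- arXiv:1501.03419 — 7 statements merged into one kernel-verified Lean document; each statement's English description precedes it below -/
import Mathlib

section
/- For A = [[a,b],[c,d]] with positive entries, the following are equivalent: (i) the induced map T_A(x) = ((a−b)x+b)/((a+c−b−d)x+b+d) is strictly concave on [0,1]; (ii) α_A = a+c−b−d > 0; (iii) ϱ_A = 2b/(β_A+γ_A) > 0; (iv) a−d+γ_A > 2b; where β_A = a−d−2b and γ_A = √((a−d)²+4bc). -/
/-!
`T_A` is the Möbius map `x ↦ (p x + q) / (r x + s)` with `p = a - b`, `q = b`, `r = α_A`,
`s = b + d`, whose "determinant" `p s - q r` is `det A`. Its denominator is positive on `[0, 1]`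
(it is `s` at `0` and `a + c` at `1`), and its second derivative is `-2 r (p s - q r) / (r x + s)³`,
so it is strictly concave there iff `α_A det A > 0`, i.e. iff `α_A > 0`; conversely the midpoint gap
`T(1/2) - (T 0 + T 1)/2` has the sign of `α_A det A`. For the square root,
`γ_A² = (2b - (a - d))² + 4 b α_A`, so `2b - (a - d) < γ_A` iff `α_A > 0`.
-/

open Set Topology

section Mobius

variable (p q r s : ℝ)

theorem hasDerivAt_mobius {x : ℝ} (hx : r * x + s ≠ 0) :
    HasDerivAt (fun y => (p * y + q) / (r * y + s)) ((p * s - q * r) / (r * x + s) ^ 2) x := by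
  have hnum : HasDerivAt (fun y => p * y + q) p x := by
    simpa using ((hasDerivAt_id x).const_mul p).add_const q
  have hden : HasDerivAt (fun y => r * y + s) r x := by
    simpa using ((hasDerivAt_id x).const_mul r).add_const s
  refine (hnum.div hden hx).congr_deriv ?_
  ring

theorem deriv2_mobius {x : ℝ} (hx : r * x + s ≠ 0) :
    deriv^[2] (fun y => (p * y + q) / (r * y + s)) x
      = -(2 * r * (p * s - q * r)) / (r * x + s) ^ 3 := by
  have hderiv : deriv (fun y => (p * y + q) / (r * y + s))
      =ᶠ[𝓝 x] fun y => (p * s - q * r) / (r * y + s) ^ 2 := by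
    have hopen : IsOpen {y : ℝ | r * y + s ≠ 0} := isOpen_ne_fun (by fun_prop) (by fun_prop)
    filter_upwards [hopen.mem_nhds hx] with y hy
    exact (hasDerivAt_mobius p q r s hy).deriv
  have hden : HasDerivAt (fun y => (r * y + s) ^ 2) (2 * (r * x + s) * r) x := by
    refine ((((hasDerivAt_id x).const_mul r).add_const s).pow 2).congr_deriv ?_
    simp
  have hderiv' : HasDerivAt (fun y => (p * s - q * r) / (r * y + s) ^ 2)
      (-(2 * r * (p * s - q * r)) / (r * x + s) ^ 3) x := by
    refine ((hasDerivAt_const x (p * s - q * r)).div hden (pow_ne_zero 2 hx)).congr_deriv ?_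
    field_simp
    ring
  rw [Function.iterate_succ, Function.iterate_one, Function.comp_apply, hderiv.deriv_eq,
    hderiv'.deriv]

theorem mobius_midpoint_sub_average (hs : s ≠ 0) (hrs : r + s ≠ 0) (hrs2 : r + 2 * s ≠ 0) :
    (p / 2 + q) / (r / 2 + s) - (q / s + (p + q) / (r + s)) / 2
      = r * (p * s - q * r) / (2 * s * (r + s) * (r + 2 * s)) := by
  field_simp
  ring

theorem mul_add_pos_of_mem_Icc {x : ℝ} (hs : 0 < s) (hrs : 0 < r + s) (hx : x ∈ Icc 0 1) :
    0 < r * x + s := by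
  obtain ⟨hx0, hx1⟩ := hx
  rcases hx1.lt_or_eq with hx1 | rfl
  · nlinarith [mul_pos (sub_pos.2 hx1) hs, mul_nonneg hx0 hrs.le]
  · linarith

theorem strictConcaveOn_mobius_Icc_iff (hs : 0 < s) (hrs : 0 < r + s) :
    StrictConcaveOn ℝ (Icc 0 1) (fun x => (p * x + q) / (r * x + s)) ↔ 0 < r * (p * s - q * r) := by
  have hden : ∀ x ∈ Icc (0 : ℝ) 1, 0 < r * x + s := fun _ hx =>
    mul_add_pos_of_mem_Icc r s hs hrs hx
  constructor
  · intro h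
    have hmid := h.2 (by simp : (0 : ℝ) ∈ Icc 0 1) (by simp : (1 : ℝ) ∈ Icc 0 1) zero_ne_one
      (by norm_num : (0 : ℝ) < 1 / 2) (by norm_num : (0 : ℝ) < 1 / 2) (by norm_num)
    have hgap := mobius_midpoint_sub_average p q r s hs.ne' hrs.ne' (by linarith)
    simp only [smul_eq_mul] at hmid
    have hD : 0 < 2 * s * (r + s) * (r + 2 * s) := by
      have : 0 < r + 2 * s := by linarith
      positivity
    have hquot : 0 < r * (p * s - q * r) / (2 * s * (r + s) * (r + 2 * s)) := by
      rw [← hgap]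
      ring_nf at hmid ⊢
      linarith
    exact (div_pos_iff_of_pos_right hD).1 hquot
  · intro hpos
    refine strictConcaveOn_of_deriv2_neg (convex_Icc 0 1) ?_ fun x hx => ?_
    · exact ContinuousOn.div (by fun_prop) (by fun_prop) fun x hx => (hden x hx).ne'
    · have hx' := hden x (interior_subset hx)
      rw [deriv2_mobius p q r s hx'.ne']
      exact div_neg_of_neg_of_pos (by linarith) (pow_pos hx' 3)

end Mobius

theorem two_mul_lt_sub_add_sqrt_iff {a b c d : ℝ} (hb : 0 < b) (hc : 0 < c) :
    2 * b < a - d + √((a - d) ^ 2 + 4 * b * c) ↔ 0 < a + c - b - d := by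
  have hsq : (a - d) ^ 2 + 4 * b * c = (2 * b - (a - d)) ^ 2 + 4 * b * (a + c - b - d) := by ring
  rcases le_or_gt 0 (2 * b - (a - d)) with ht | ht
  · rw [← sub_lt_iff_lt_add', hsq, Real.lt_sqrt ht, lt_add_iff_pos_right]
    exact mul_pos_iff_of_pos_left (by positivity)
  · have : 0 ≤ √((a - d) ^ 2 + 4 * b * c) := Real.sqrt_nonneg _
    constructor <;> intro <;> nlinarith

theorem stmt_9 (a b c d : ℝ) (ha : 0 < a) (hb : 0 < b) (hc : 0 < c) (hd : 0 < d)
    (hdet : 0 < a*d - b*c) :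
    (StrictConcaveOn ℝ (Set.Icc (0:ℝ) 1)
        (fun x => ((a - b)*x + b) / ((a + c - b - d)*x + b + d))
      ↔ 0 < a + c - b - d) ∧
    (0 < a + c - b - d ↔ 0 < 2*b / (a - d - 2*b + Real.sqrt ((a - d)^2 + 4*b*c))) ∧
    (0 < 2*b / (a - d - 2*b + Real.sqrt ((a - d)^2 + 4*b*c))
      ↔ 2*b < a - d + Real.sqrt ((a - d)^2 + 4*b*c)) := by
  have hρ : 0 < 2 * b / (a - d - 2 * b + √((a - d) ^ 2 + 4 * b * c))
      ↔ 2 * b < a - d + √((a - d) ^ 2 + 4 * b * c) := by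
    rw [div_pos_iff_of_pos_left (by positivity)]
    constructor <;> intro <;> linarith
  refine ⟨?_, (two_mul_lt_sub_add_sqrt_iff hb hc).symm.trans hρ.symm, hρ⟩
  have hT : (fun x => ((a - b) * x + b) / ((a + c - b - d) * x + b + d))
      = fun x => ((a - b) * x + b) / ((a + c - b - d) * x + (b + d)) := by
    simp only [add_assoc]
  have hdet' : (a - b) * (b + d) - b * (a + c - b - d) = a * d - b * c := by ring
  rw [hT, strictConcaveOn_mobius_Icc_iff _ _ _ _ (by positivity) (by linarith), hdet']
  exact mul_pos_iff_of_pos_right hdet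
end

section
/- For A = [[a,b],[c,d]] with positive entries and det A > 0, the following are equivalent: (i) α_A = a+c−b−d < 0; (ii) ϱ_A = 2b/(β_A+γ_A) < −1; (iii) a−d+γ_A < 2b; where β_A = a−d−2b and γ_A = √((a−d)²+4bc). -/
/-!
With `x = a - d` and `γ = √(x² + 4bc)`, positivity of `bc` gives `γ > |x|`, so the denominator
`x - 2b + γ` exceeds `-2b`; hence `2b / (x - 2b + γ) < -1` says exactly that this denominator is
negative, i.e. `x + γ < 2b`. Squaring `γ < 2b - x` turns the latter into `x² + 4bc < (2b - x)²`,
that is `c < b - x`, which is `α_A < 0`.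
-/

namespace Real

lemma neg_lt_sqrt_sq_add {x p : ℝ} (hp : 0 < p) : -x < √(x ^ 2 + p) :=
  lt_sqrt_of_sq_lt (by rw [neg_sq]; linarith)

lemma add_sqrt_sq_add_mul_lt_iff {x b c : ℝ} (hb : 0 < b) (hc : 0 < c) :
    x + √(x ^ 2 + 4 * b * c) < 2 * b ↔ x + c - b < 0 := by
  rw [← lt_sub_iff_add_lt']
  constructor
  · intro h
    have h_pos : 0 < 2 * b - x := (sqrt_nonneg _).trans_lt h
    rw [sqrt_lt' h_pos] at h
    nlinarith
  · intro h
    have h_pos : 0 < 2 * b - x := by linarith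
    rw [sqrt_lt' h_pos]
    nlinarith

end Real

lemma div_lt_neg_one_iff_of_pos {n D : ℝ} (hn : 0 < n) : n / D < -1 ↔ D < 0 ∧ -n < D := by
  rcases lt_or_ge D 0 with hD | hD
  · rw [div_lt_iff_of_neg hD]
    exact ⟨fun h => ⟨hD, by linarith⟩, fun h => by linarith [h.2]⟩
  · have : 0 ≤ n / D := div_nonneg hn.le hD
    exact ⟨fun h => by linarith, fun h => absurd h.1 (not_lt.2 hD)⟩

theorem stmt_10_general (a b c d : ℝ) (hb : 0 < b) (hc : 0 < c) :
    (a + c - b - d < 0 ↔ 2*b / (a - d - 2*b + Real.sqrt ((a - d)^2 + 4*b*c)) < -1) ∧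
    (2*b / (a - d - 2*b + Real.sqrt ((a - d)^2 + 4*b*c)) < -1
      ↔ a - d + Real.sqrt ((a - d)^2 + 4*b*c) < 2*b) := by
  have h_num_pos : 0 < 2 * b := by positivity
  have h_sum_pos : 0 < a - d + Real.sqrt ((a - d) ^ 2 + 4 * b * c) := by
    linarith [Real.neg_lt_sqrt_sq_add (x := a - d) (by positivity : 0 < 4 * b * c)]
  have h23 : 2*b / (a - d - 2*b + Real.sqrt ((a - d)^2 + 4*b*c)) < -1
      ↔ a - d + Real.sqrt ((a - d)^2 + 4*b*c) < 2*b := by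
    rw [div_lt_neg_one_iff_of_pos h_num_pos]
    exact ⟨fun h => by linarith [h.1], fun h => ⟨by linarith, by linarith⟩⟩
  have h13 : a + c - b - d < 0 ↔ a - d + Real.sqrt ((a - d)^2 + 4*b*c) < 2*b := by
    rw [Real.add_sqrt_sq_add_mul_lt_iff hb hc]
    constructor <;> intro h <;> linarith
  exact ⟨h13.trans h23.symm, h23⟩

theorem stmt_10 (a b c d : ℝ) (ha : 0 < a) (hb : 0 < b) (hc : 0 < c) (hd : 0 < d)
    (hdet : 0 < a*d - b*c) :
    (a + c - b - d < 0 ↔ 2*b / (a - d - 2*b + Real.sqrt ((a - d)^2 + 4*b*c)) < -1) ∧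
    (2*b / (a - d - 2*b + Real.sqrt ((a - d)^2 + 4*b*c)) < -1
      ↔ a - d + Real.sqrt ((a - d)^2 + 4*b*c) < 2*b) :=
  stmt_10_general a b c d hb hc
end

section
/- If A = [[a,b],[c,d]] has positive entries, det A > 0, and α_A = a+c−b−d > 0, then the smaller root r_A = −(γ_A+β_A)/(2α_A) of the quadratic q_A(z) = α_A z² + β_A z − b satisfies r_A > −1, where β_A = a−d−2b and γ_A = √((a−d)²+4bc). -/
/-! Multiplying by `2 α_A > 0`, the claim `r_A > -1` becomes `γ_A < a + 2c - d`. The right side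
exceeds `b + c > 0`, so we may square, and the squared inequality is
`(a + 2c - d)² - ((a - d)² + 4bc) = 4c · α_A > 0`. -/

lemma sqrt_sq_sub_add_four_mul_lt {a b c d : ℝ} (hb : 0 < b) (hc : 0 < c)
    (hα : 0 < a + c - b - d) :
    Real.sqrt ((a - d)^2 + 4*b*c) < a + 2*c - d := by
  rw [Real.sqrt_lt' (by linarith)]
  nlinarith [mul_pos hc hα]

theorem stmt_14_general (a b c d : ℝ) (hb : 0 < b) (hc : 0 < c)
    (hα : 0 < a + c - b - d) :
    -1 < -(Real.sqrt ((a - d)^2 + 4*b*c) + (a - d - 2*b)) / (2*(a + c - b - d)) := by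
  rw [neg_div, neg_lt_neg_iff, div_lt_one (by linarith)]
  linarith [sqrt_sq_sub_add_four_mul_lt hb hc hα]

theorem stmt_14 (a b c d : ℝ) (ha : 0 < a) (hb : 0 < b) (hc : 0 < c) (hd : 0 < d)
    (hdet : 0 < a*d - b*c) (hα : 0 < a + c - b - d) :
    -1 < -(Real.sqrt ((a - d)^2 + 4*b*c) + (a - d - 2*b)) / (2*(a + c - b - d)) :=
  stmt_14_general a b c d hb hc hα
end

section
/- Let (A₀, A₁) be a pair of 2×2 positive matrices with positive determinants satisfying α_{A₁} < 0 < α_{A₀}. Then q_{A₁}(ϱ_{A₀}) < 0 < q_{A₀}(ϱ_{A₁}), where q_A(z) = α_A z² + β_A z − b (b the top-right entry of A) and ϱ_A = (γ_A − β_A)/(2α_A). -/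
/-!
The discriminant of `q_A` is `β² + 4αb = γ²`, so `ϱ_A` is a root of `q_A`, and
`q_A(-1) = c > 0 > -b = q_A(0)`. Hence `ϱ_A > 0` when `α > 0`, while for `α < 0` the concave `q_A`
has its other root in `(-1, 0)` and `ϱ_A < -1`. For `α < 0` all coefficients of `q_A` are negative,
so `q_A < 0` on `(0, ∞)`; for `α > 0` the convex `q_A` exceeds `q_A(-1) = c` on `(-∞, -1)`.
-/

namespace Mat2

variable {a b c d z : ℝ}

def alpha (a b c d : ℝ) : ℝ := a + c - b - d

def beta (a b d : ℝ) : ℝ := a - d - 2 * b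

noncomputable def gamma (a b c d : ℝ) : ℝ := √((a - d) ^ 2 + 4 * b * c)

noncomputable def rho (a b c d : ℝ) : ℝ := (gamma a b c d - beta a b d) / (2 * alpha a b c d)

def q (a b c d z : ℝ) : ℝ := alpha a b c d * z ^ 2 + beta a b d * z - b

lemma beta_eq : beta a b d = alpha a b c d - b - c := by
  unfold alpha beta; ring

lemma disc_eq_beta_sq_add : (a - d) ^ 2 + 4 * b * c = beta a b d ^ 2 + 4 * alpha a b c d * b := by
  unfold alpha beta; ring

lemma disc_eq_sq_sub : (a - d) ^ 2 + 4 * b * c =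
    (beta a b d - 2 * alpha a b c d) ^ 2 - 4 * alpha a b c d * c := by
  unfold alpha beta; ring

lemma q_eq_add_mul : q a b c d z = c + (z + 1) * (alpha a b c d * (z - 1) + beta a b d) := by
  unfold q alpha beta; ring

lemma beta_lt_gamma (hb : 0 < b) (hα : 0 < alpha a b c d) : beta a b d < gamma a b c d :=
  Real.lt_sqrt_of_sq_lt <| by rw [disc_eq_beta_sq_add]; linarith [mul_pos hα hb]

lemma beta_sub_two_alpha_lt_gamma (hc : 0 < c) (hα : alpha a b c d < 0) :
    beta a b d - 2 * alpha a b c d < gamma a b c d :=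
  Real.lt_sqrt_of_sq_lt <| by rw [disc_eq_sq_sub]; linarith [mul_neg_of_neg_of_pos hα hc]

lemma rho_pos (hb : 0 < b) (hα : 0 < alpha a b c d) : 0 < rho a b c d :=
  div_pos (sub_pos.2 (beta_lt_gamma hb hα)) (by positivity)

lemma rho_lt_neg_one (hc : 0 < c) (hα : alpha a b c d < 0) : rho a b c d < -1 := by
  rw [rho, div_lt_iff_of_neg (by linarith)]
  linarith [beta_sub_two_alpha_lt_gamma hc hα]

lemma q_neg_of_pos (hb : 0 < b) (hc : 0 ≤ c) (hα : alpha a b c d < 0) (hz : 0 < z) :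
    q a b c d z < 0 := by
  have hβ : beta a b d < 0 := by rw [beta_eq (c := c)]; linarith
  have : alpha a b c d * z ^ 2 < 0 := mul_neg_of_neg_of_pos hα (by positivity)
  have : beta a b d * z < 0 := mul_neg_of_neg_of_pos hβ hz
  unfold q; linarith

lemma q_pos_of_lt_neg_one (hb : 0 ≤ b) (hc : 0 < c) (hα : 0 < alpha a b c d) (hz : z < -1) :
    0 < q a b c d z := by
  have hslope : alpha a b c d * (z - 1) + beta a b d < 0 := by
    rw [beta_eq (c := c)]
    linarith [mul_neg_of_pos_of_neg hα (by linarith : z < 0)]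
  rw [q_eq_add_mul]
  linarith [mul_pos_of_neg_of_neg (by linarith : z + 1 < 0) hslope]

end Mat2

open Mat2 in
theorem stmt_15_general (a₀ b₀ c₀ d₀ a₁ b₁ c₁ d₁ : ℝ)
    (hb₀ : 0 < b₀) (hc₀ : 0 < c₀)
    (hb₁ : 0 < b₁) (hc₁ : 0 < c₁)
    (hα₁ : a₁ + c₁ - b₁ - d₁ < 0) (hα₀ : 0 < a₀ + c₀ - b₀ - d₀) :
    (a₁ + c₁ - b₁ - d₁) *
        ((Real.sqrt ((a₀ - d₀)^2 + 4*b₀*c₀) - (a₀ - d₀ - 2*b₀)) / (2*(a₀ + c₀ - b₀ - d₀)))^2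
      + (a₁ - d₁ - 2*b₁) *
        ((Real.sqrt ((a₀ - d₀)^2 + 4*b₀*c₀) - (a₀ - d₀ - 2*b₀)) / (2*(a₀ + c₀ - b₀ - d₀)))
      - b₁ < 0 ∧
    0 < (a₀ + c₀ - b₀ - d₀) *
        ((Real.sqrt ((a₁ - d₁)^2 + 4*b₁*c₁) - (a₁ - d₁ - 2*b₁)) / (2*(a₁ + c₁ - b₁ - d₁)))^2
      + (a₀ - d₀ - 2*b₀) *
        ((Real.sqrt ((a₁ - d₁)^2 + 4*b₁*c₁) - (a₁ - d₁ - 2*b₁)) / (2*(a₁ + c₁ - b₁ - d₁)))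
      - b₀ := by
  show q a₁ b₁ c₁ d₁ (rho a₀ b₀ c₀ d₀) < 0 ∧ 0 < q a₀ b₀ c₀ d₀ (rho a₁ b₁ c₁ d₁)
  exact ⟨q_neg_of_pos hb₁ hc₁.le hα₁ (rho_pos hb₀ hα₀),
    q_pos_of_lt_neg_one hb₀.le hc₀ hα₀ (rho_lt_neg_one hc₁ hα₁)⟩

theorem stmt_15 (a₀ b₀ c₀ d₀ a₁ b₁ c₁ d₁ : ℝ)
    (ha₀ : 0 < a₀) (hb₀ : 0 < b₀) (hc₀ : 0 < c₀) (hd₀ : 0 < d₀)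
    (ha₁ : 0 < a₁) (hb₁ : 0 < b₁) (hc₁ : 0 < c₁) (hd₁ : 0 < d₁)
    (hdet₀ : 0 < a₀*d₀ - b₀*c₀) (hdet₁ : 0 < a₁*d₁ - b₁*c₁)
    (hα₁ : a₁ + c₁ - b₁ - d₁ < 0) (hα₀ : 0 < a₀ + c₀ - b₀ - d₀) :
    (a₁ + c₁ - b₁ - d₁) *
        ((Real.sqrt ((a₀ - d₀)^2 + 4*b₀*c₀) - (a₀ - d₀ - 2*b₀)) / (2*(a₀ + c₀ - b₀ - d₀)))^2
      + (a₁ - d₁ - 2*b₁) *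
        ((Real.sqrt ((a₀ - d₀)^2 + 4*b₀*c₀) - (a₀ - d₀ - 2*b₀)) / (2*(a₀ + c₀ - b₀ - d₀)))
      - b₁ < 0 ∧
    0 < (a₀ + c₀ - b₀ - d₀) *
        ((Real.sqrt ((a₁ - d₁)^2 + 4*b₁*c₁) - (a₁ - d₁ - 2*b₁)) / (2*(a₁ + c₁ - b₁ - d₁)))^2
      + (a₀ - d₀ - 2*b₀) *
        ((Real.sqrt ((a₁ - d₁)^2 + 4*b₁*c₁) - (a₁ - d₁ - 2*b₁)) / (2*(a₁ + c₁ - b₁ - d₁)))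
      - b₀ :=
  stmt_15_general a₀ b₀ c₀ d₀ a₁ b₁ c₁ d₁ hb₀ hc₀ hb₁ hc₁ hα₁ hα₀
end

section
/- For A = [[a,b],[c,d]] with positive entries and for each k ≥ 1, writing T_{A^k} for the Möbius map induced by A^k, the finite sum Σ_{n=1}^{k} (log S_A' ∘ T_A^n)'(x) equals 2/(x + δ_{A^k}), where δ_B = (b_B+d_B)/α_B for B = [[a_B,b_B],[c_B,d_B]], S_A = T_A^{−1}, and the identity holds wherever all expressions are defined. -/
/-!
Let `w_B(y) = α_B y + b_B + d_B` be the denominator of `T_B`. These denominators form a cocycle,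
`w_{AB}(y) = w_A(T_B y) w_B(y)`, so `T_A^n = T_{A^n}`; and since `S_A = T_{adj A}` with
`adj A · A^(n+1) = det A · A^n`, one gets
`log S_A'(T_A^n y) = 2 log w_{A^n}(y) - 2 log w_{A^(n-1)}(y) - log det A`.
The sum telescopes, and the derivative of `2 log w_{A^k}` is
`2 α_{A^k} / w_{A^k} = 2 / (x + δ_{A^k})`.
Positive entries keep every `w_{A^n}` positive on a neighbourhood of `[0, 1]`.
-/

open Real Filter Topology Matrix

/- `mobius B` is the action of `B` on `[0, 1]` through `y ↦ (y, 1 - y)`: `mobiusNum B y` is the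
first coordinate of `B (y, 1 - y)` and `mobiusDen B y` the sum of its coordinates, so
`mobius B = T_B` and `mobiusDenSlope B = α_B`. -/
def mobiusDenSlope (B : Matrix (Fin 2) (Fin 2) ℝ) : ℝ := B 0 0 + B 1 0 - B 0 1 - B 1 1

def mobiusNum (B : Matrix (Fin 2) (Fin 2) ℝ) (y : ℝ) : ℝ := (B 0 0 - B 0 1) * y + B 0 1

def mobiusDen (B : Matrix (Fin 2) (Fin 2) ℝ) (y : ℝ) : ℝ :=
  mobiusDenSlope B * y + (B 0 1 + B 1 1)

noncomputable def mobius (B : Matrix (Fin 2) (Fin 2) ℝ) (y : ℝ) : ℝ :=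
  mobiusNum B y / mobiusDen B y

section Mobius

variable (A B : Matrix (Fin 2) (Fin 2) ℝ) (y : ℝ)

lemma mobiusNum_mul :
    mobiusNum (A * B) y = (A 0 0 - A 0 1) * mobiusNum B y + A 0 1 * mobiusDen B y := by
  simp only [mobiusNum, mobiusDen, mobiusDenSlope, mul_apply, Fin.sum_univ_two]; ring

lemma mobiusDen_mul :
    mobiusDen (A * B) y = mobiusDenSlope A * mobiusNum B y + (A 0 1 + A 1 1) * mobiusDen B y := by
  simp only [mobiusNum, mobiusDen, mobiusDenSlope, mul_apply, Fin.sum_univ_two]; ring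

variable {A B y}

lemma mobiusDen_mul_of_ne_zero (h : mobiusDen B y ≠ 0) :
    mobiusDen (A * B) y = mobiusDen A (mobius B y) * mobiusDen B y := by
  rw [mobiusDen_mul, mobius]
  generalize mobiusDen B y = w at *
  simp only [mobiusDen]; field_simp

lemma mobius_mul (h : mobiusDen B y ≠ 0) : mobius (A * B) y = mobius A (mobius B y) := by
  have hnum : mobiusNum (A * B) y = mobiusNum A (mobius B y) * mobiusDen B y := by
    rw [mobiusNum_mul, mobius]
    generalize mobiusDen B y = w at *
    simp only [mobiusNum]; field_simp
  rw [mobius, hnum, mobiusDen_mul_of_ne_zero h, mul_div_mul_right _ _ h]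
  rfl

variable (A B y)

lemma mobius_one : mobius 1 y = y := by simp [mobius, mobiusNum, mobiusDen, mobiusDenSlope]

lemma mobiusDen_smul (c : ℝ) : mobiusDen (c • B) y = c * mobiusDen B y := by
  simp only [mobiusDen, mobiusDenSlope, Matrix.smul_apply, smul_eq_mul]; ring

lemma hasDerivAt_mobiusDen : HasDerivAt (mobiusDen B) (mobiusDenSlope B) y :=
  (((hasDerivAt_id y).const_mul _).add_const _).congr_deriv (mul_one _)

lemma hasDerivAt_mobius_s16 (h : mobiusDen B y ≠ 0) :
    HasDerivAt (mobius B) (B.det / mobiusDen B y ^ 2) y := by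
  have hnum : HasDerivAt (mobiusNum B) (B 0 0 - B 0 1) y :=
    (((hasDerivAt_id y).const_mul _).add_const _).congr_deriv (mul_one _)
  refine (hnum.div (hasDerivAt_mobiusDen B y) h).congr_deriv (congrArg (· / _) ?_)
  simp only [det_fin_two, mobiusNum, mobiusDen, mobiusDenSlope]; ring

lemma iterate_mobius (n : ℕ) (h : ∀ j < n, mobiusDen (A ^ j) y ≠ 0) :
    (mobius A)^[n] y = mobius (A ^ n) y := by
  induction n with
  | zero => simp [mobius_one]
  | succ n ih =>
    rw [Function.iterate_succ_apply', ih fun j hj => h j (by omega), pow_succ',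
      mobius_mul (h n n.lt_add_one)]

end Mobius

section Adjugate

variable {A : Matrix (Fin 2) (Fin 2) ℝ} {y : ℝ}

lemma mobiusDen_adjugate_mobius_pow_succ {n : ℕ} (h : mobiusDen (A ^ (n + 1)) y ≠ 0) :
    mobiusDen A.adjugate (mobius (A ^ (n + 1)) y)
      = A.det * mobiusDen (A ^ n) y / mobiusDen (A ^ (n + 1)) y := by
  rw [eq_div_iff h, ← mobiusDen_mul_of_ne_zero h, pow_succ', ← mul_assoc, adjugate_mul,
    smul_mul, one_mul, mobiusDen_smul]

lemma log_deriv_mobius_adjugate_mobius_pow_succ (hdet : A.det ≠ 0) {n : ℕ}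
    (h₀ : mobiusDen (A ^ n) y ≠ 0) (h₁ : mobiusDen (A ^ (n + 1)) y ≠ 0) :
    log (deriv (mobius A.adjugate) (mobius (A ^ (n + 1)) y))
      = 2 * log (mobiusDen (A ^ (n + 1)) y) - 2 * log (mobiusDen (A ^ n) y) - log A.det := by
  have hden := mobiusDen_adjugate_mobius_pow_succ h₁
  have hden_ne : mobiusDen A.adjugate (mobius (A ^ (n + 1)) y) ≠ 0 := by
    rw [hden]; exact div_ne_zero (mul_ne_zero hdet h₀) h₁
  rw [(hasDerivAt_mobius_s16 _ _ hden_ne).deriv, det_adjugate, hden, Fintype.card_fin, pow_one,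
    show A.det / (A.det * mobiusDen (A ^ n) y / mobiusDen (A ^ (n + 1)) y) ^ 2
      = mobiusDen (A ^ (n + 1)) y ^ 2 / (A.det * mobiusDen (A ^ n) y ^ 2) by field_simp,
    log_div (by positivity) (by positivity), log_mul hdet (by positivity), log_pow, log_pow]
  push_cast; ring

end Adjugate

lemma sum_pow_apply_pos {ι : Type*} [Fintype ι] [DecidableEq ι] {A : Matrix ι ι ℝ}
    (hA : ∀ i j, 0 < A i j) (n : ℕ) (j : ι) : 0 < ∑ i, (A ^ n) i j := by
  induction n generalizing j with
  | zero => simp [one_apply]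
  | succ n ih =>
    simp only [pow_succ, mul_apply]
    rw [Finset.sum_comm]
    simp only [← Finset.sum_mul]
    exact Finset.sum_pos (fun k _ => mul_pos (ih k) (hA k j)) ⟨j, Finset.mem_univ j⟩

lemma mobiusDen_pos {B : Matrix (Fin 2) (Fin 2) ℝ} (h₀ : 0 < B 0 0 + B 1 0)
    (h₁ : 0 < B 0 1 + B 1 1) {y : ℝ} (hy : y ∈ Set.Icc 0 1) : 0 < mobiusDen B y := by
  obtain ⟨hy₀, hy₁⟩ := hy
  have hconvex : mobiusDen B y = (B 0 0 + B 1 0) * y + (B 0 1 + B 1 1) * (1 - y) := by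
    simp only [mobiusDen, mobiusDenSlope]; ring
  rw [hconvex]
  rcases hy₀.eq_or_lt with rfl | hy₀
  · simpa using h₁
  · exact add_pos_of_pos_of_nonneg (mul_pos h₀ hy₀) (mul_nonneg h₁.le (sub_nonneg.2 hy₁))

lemma eventually_mobiusDen_pow_pos {A : Matrix (Fin 2) (Fin 2) ℝ} (hA : ∀ i j, 0 < A i j)
    {x : ℝ} (hx : x ∈ Set.Icc 0 1) (n : ℕ) : ∀ᶠ y in 𝓝 x, 0 < mobiusDen (A ^ n) y := by
  have hpos := mobiusDen_pos (by simpa using sum_pow_apply_pos hA n 0)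
    (by simpa using sum_pow_apply_pos hA n 1) hx
  exact continuousAt_const.eventually_lt (hasDerivAt_mobiusDen _ x).continuousAt hpos

lemma deriv_log_deriv_mobius_adjugate_iterate_succ {A : Matrix (Fin 2) (Fin 2) ℝ}
    (hA : ∀ i j, 0 < A i j) (hdet : A.det ≠ 0) {x : ℝ} (hx : x ∈ Set.Icc 0 1) (n : ℕ) :
    deriv (fun y => log (deriv (mobius A.adjugate) ((mobius A)^[n + 1] y))) x
      = 2 * mobiusDenSlope (A ^ (n + 1)) / mobiusDen (A ^ (n + 1)) x
        - 2 * mobiusDenSlope (A ^ n) / mobiusDen (A ^ n) x := by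
  have hpos : ∀ᶠ y in 𝓝 x, ∀ j ∈ Finset.range (n + 2), 0 < mobiusDen (A ^ j) y :=
    (eventually_all_finset _).2 fun j _ => eventually_mobiusDen_pow_pos hA hx j
  have heq : (fun y => log (deriv (mobius A.adjugate) ((mobius A)^[n + 1] y)))
      =ᶠ[𝓝 x] fun y => 2 * log (mobiusDen (A ^ (n + 1)) y) - 2 * log (mobiusDen (A ^ n) y)
        - log A.det := by
    filter_upwards [hpos] with y hy
    have hy' : ∀ j ≤ n + 1, mobiusDen (A ^ j) y ≠ 0 := fun j hj =>
      (hy j (Finset.mem_range.2 (by omega))).ne'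
    rw [iterate_mobius A y (n + 1) fun j hj => hy' j hj.le,
      log_deriv_mobius_adjugate_mobius_pow_succ hdet (hy' n n.le_succ) (hy' (n + 1) le_rfl)]
  have hlog (m : ℕ) : HasDerivAt (fun y => 2 * log (mobiusDen (A ^ m) y))
      (2 * (mobiusDenSlope (A ^ m) / mobiusDen (A ^ m) x)) x :=
    ((hasDerivAt_mobiusDen _ x).log
      (eventually_mobiusDen_pow_pos hA hx m).self_of_nhds.ne').const_mul 2
  rw [heq.deriv_eq, mul_div_assoc, mul_div_assoc]
  exact (((hlog (n + 1)).sub (hlog n)).sub_const _).deriv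

theorem stmt_16_general (a b c d : ℝ) (ha : 0 < a) (hb : 0 < b) (hc : 0 < c) (hd : 0 < d)
    (hdet : 0 < a*d - b*c)
    (k : ℕ)
    (M : Matrix (Fin 2) (Fin 2) ℝ) (hM : M = !![a, b; c, d])
    (hαk : (M^k) 0 0 + (M^k) 1 0 - (M^k) 0 1 - (M^k) 1 1 ≠ 0)
    (T S : ℝ → ℝ)
    (hT : T = fun x => ((a - b)*x + b) / ((a + c - b - d)*x + b + d))
    (hS : S = fun x => ((b + d)*x - b) / (-(a + c - b - d)*x + a - b))
    (x : ℝ) (hx : x ∈ Set.Icc (0:ℝ) 1) :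
    ∑ n ∈ Finset.Icc 1 k, deriv (fun y => Real.log (deriv S (T^[n] y))) x
      = 2 / (x + ((M^k) 0 1 + (M^k) 1 1) /
          ((M^k) 0 0 + (M^k) 1 0 - (M^k) 0 1 - (M^k) 1 1)) := by
  have hpos : ∀ i j, 0 < M i j := by
    subst hM; intro i j; fin_cases i <;> fin_cases j <;> assumption
  have hdetM : M.det ≠ 0 := by rw [hM, det_fin_two_of]; exact hdet.ne'
  have hTM : T = mobius M := by
    ext y; simp [hT, hM, mobius, mobiusNum, mobiusDen, mobiusDenSlope]; ring
  have hSM : S = mobius M.adjugate := by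
    ext y; simp [hS, hM, mobius, mobiusNum, mobiusDen, mobiusDenSlope, adjugate_fin_two_of]; ring
  subst hTM hSM
  set g : ℕ → ℝ := fun n => 2 * mobiusDenSlope (M ^ n) / mobiusDen (M ^ n) x
  rw [← Finset.Ico_add_one_right_eq_Icc, Finset.sum_Ico_eq_sum_range, Nat.add_sub_cancel]
  simp_rw [add_comm 1, deriv_log_deriv_mobius_adjugate_iterate_succ hpos hdetM hx]
  rw [Finset.sum_range_sub g]
  have hg₀ : g 0 = 0 := by simp [g, mobiusDenSlope]
  rw [hg₀, sub_zero, ← mul_div_mul_left 2 _ hαk, mul_add, mul_div_cancel₀ _ hαk,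
    mul_comm _ (2 : ℝ)]
  rfl

/-- for A = [[a,b],[c,d]] positive with det A > 0, and k ≥ 1,
the finite sum ∑_{n=1}^k (log S_A' ∘ T_A^n)'(x) equals 2/(x + δ_{A^k}),
wherever all expressions are defined. -/
theorem stmt_16 (a b c d : ℝ) (ha : 0 < a) (hb : 0 < b) (hc : 0 < c) (hd : 0 < d)
    (hdet : 0 < a*d - b*c) (hα : a + c - b - d ≠ 0)
    (k : ℕ) (hk : 1 ≤ k)
    (M : Matrix (Fin 2) (Fin 2) ℝ) (hM : M = !![a, b; c, d])
    (hαk : (M^k) 0 0 + (M^k) 1 0 - (M^k) 0 1 - (M^k) 1 1 ≠ 0)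
    (T S : ℝ → ℝ)
    (hT : T = fun x => ((a - b)*x + b) / ((a + c - b - d)*x + b + d))
    (hS : S = fun x => ((b + d)*x - b) / (-(a + c - b - d)*x + a - b))
    (x : ℝ) (hx : x ∈ Set.Icc (0:ℝ) 1)
    (hden : x + ((M^k) 0 1 + (M^k) 1 1) /
        ((M^k) 0 0 + (M^k) 1 0 - (M^k) 0 1 - (M^k) 1 1) ≠ 0) :
    ∑ n ∈ Finset.Icc 1 k, deriv (fun y => Real.log (deriv S (T^[n] y))) x
      = 2 / (x + ((M^k) 0 1 + (M^k) 1 1) /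
          ((M^k) 0 0 + (M^k) 1 0 - (M^k) 0 1 - (M^k) 1 1)) :=
  stmt_16_general a b c d ha hb hc hd hdet k M hM hαk T S hT hS x hx
end

section
/- For A = [[a,b],[c,d]] with positive entries (and α_{A^k} ≠ 0 for all large k), the sequence δ_{A^k} = (b_k + d_k)/α_{A^k} converges to ϱ_A as k → ∞, where b_k, d_k are the (1,2) and (2,2) entries of A^k, α_B = a_B+c_B−b_B−d_B, and ϱ_A = 2b/(a−d−2b+√((a−d)²+4bc)). -/
/-!
With `s = √((a - d)² + 4bc)` the eigenvalues of `A` are `P, Q = (a + d ± s) / 2`, and by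
Cayley–Hamilton `s • A ^ k = (P ^ k - Q ^ k) • A + (P Q ^ k - Q P ^ k) • 1`. Both `b_k + d_k` and
`α_{A^k}` are linear in `A ^ k`, and `α` vanishes on the identity, so
`δ_{A^k} = (b + d + (P Q ^ k - Q P ^ k) / (P ^ k - Q ^ k)) / α_A`. As `|Q| < P`, the middle
ratio tends to `-Q`, and `(b + d - Q) / α_A = ϱ_A` because
`(2b + d - a + s)(a - d - 2b + s) = s² - (a - d - 2b)² = 4b α_A`.
-/

open Filter Topology

theorem smul_pow_eq_of_mul_self_eq {K R : Type*} [CommRing K] [Ring R] [Algebra K R]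
    {x : R} {P Q : K} (hx : x * x = (P + Q) • x - (P * Q) • 1) (k : ℕ) :
    (P - Q) • x ^ k = (P ^ k - Q ^ k) • x + (P * Q ^ k - Q * P ^ k) • (1 : R) := by
  induction k with
  | zero => simp only [pow_zero, sub_self, zero_smul, zero_add, mul_one]
  | succ k ih =>
    rw [pow_succ, ← smul_mul_assoc, ih, add_mul, smul_mul_assoc, smul_mul_assoc, one_mul, hx]
    match_scalars <;> ring

namespace Matrix

variable {K : Type*} [CommRing K]

theorem mul_self_fin_two (A : Matrix (Fin 2) (Fin 2) K) : A * A = A.trace • A - A.det • 1 := by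
  ext i j
  fin_cases i <;> fin_cases j <;>
    simp [mul_apply, trace_fin_two, det_fin_two, Fin.sum_univ_two] <;> ring

theorem sub_mul_pow_apply_fin_two {A : Matrix (Fin 2) (Fin 2) K} {P Q : K}
    (hsum : P + Q = A.trace) (hprod : P * Q = A.det) (k : ℕ) (i j : Fin 2) :
    (P - Q) * (A ^ k) i j =
      (P ^ k - Q ^ k) * A i j + (P * Q ^ k - Q * P ^ k) * (1 : Matrix (Fin 2) (Fin 2) K) i j := by
  have h := smul_pow_eq_of_mul_self_eq (by rw [hsum, hprod]; exact mul_self_fin_two A) k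
  simpa using congr_fun (congr_fun h i) j

theorem sub_mul_pow_apply_add_fin_two {A : Matrix (Fin 2) (Fin 2) K} {P Q : K}
    (hsum : P + Q = A.trace) (hprod : P * Q = A.det) (k : ℕ) :
    (P - Q) * ((A ^ k) 0 1 + (A ^ k) 1 1) =
      (P ^ k - Q ^ k) * (A 0 1 + A 1 1) + (P * Q ^ k - Q * P ^ k) := by
  simp only [mul_add, sub_mul_pow_apply_fin_two hsum hprod, one_fin_two, of_apply, cons_val',
    cons_val_zero, cons_val_one, cons_val_fin_one]
  ring

theorem sub_mul_pow_apply_sub_fin_two {A : Matrix (Fin 2) (Fin 2) K} {P Q : K}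
    (hsum : P + Q = A.trace) (hprod : P * Q = A.det) (k : ℕ) :
    (P - Q) * ((A ^ k) 0 0 + (A ^ k) 1 0 - (A ^ k) 0 1 - (A ^ k) 1 1) =
      (P ^ k - Q ^ k) * (A 0 0 + A 1 0 - A 0 1 - A 1 1) := by
  simp only [mul_add, mul_sub, sub_mul_pow_apply_fin_two hsum hprod, one_fin_two, of_apply,
    cons_val', cons_val_zero, cons_val_one, cons_val_fin_one]
  ring

end Matrix

theorem pow_sub_pow_pos_of_abs_lt {P Q : ℝ} (h : |Q| < P) {k : ℕ} (hk : k ≠ 0) :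
    0 < P ^ k - Q ^ k :=
  sub_pos.2 <| (le_abs_self _).trans_lt <| abs_pow Q k ▸ pow_lt_pow_left₀ h (abs_nonneg Q) hk

theorem tendsto_mul_pow_sub_mul_pow_div {P Q : ℝ} (h : |Q| < P) :
    Tendsto (fun k : ℕ => (P * Q ^ k - Q * P ^ k) / (P ^ k - Q ^ k)) atTop (𝓝 (-Q)) := by
  have hP : 0 < P := (abs_nonneg Q).trans_lt h
  have hr : Tendsto (fun k : ℕ => (Q / P) ^ k) atTop (𝓝 0) :=
    tendsto_pow_atTop_nhds_zero_of_abs_lt_one (by rwa [abs_div, abs_of_pos hP, div_lt_one hP])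
  have hlim := ((hr.const_mul P).sub_const Q).div (tendsto_const_nhds.sub hr)
    (by norm_num : (1 : ℝ) - 0 ≠ 0)
  simp only [mul_zero, zero_sub, sub_zero, div_one] at hlim
  refine hlim.congr fun k => ?_
  rw [Pi.div_apply, div_pow, ← mul_div_mul_left _ _ (pow_ne_zero k hP.ne')]
  congr 1 <;> field_simp

theorem div_eq_two_mul_div_of_sq_eq {a b c d s : ℝ} (hb : b ≠ 0) (hE : a + c - b - d ≠ 0)
    (hs : s ^ 2 = (a - d) ^ 2 + 4 * b * c) :
    (b + d - (a + d - s) / 2) / (a + c - b - d) = 2 * b / (a - d - 2 * b + s) := by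
  have key : (2 * b + d - a + s) * (a - d - 2 * b + s) = 4 * b * (a + c - b - d) := by
    linear_combination hs
  have hden : a - d - 2 * b + s ≠ 0 := by
    intro h
    rw [h, mul_zero] at key
    exact mul_ne_zero (mul_ne_zero four_ne_zero hb) hE key.symm
  rw [div_eq_div_iff hE hden]
  linear_combination key / 2

theorem stmt_17 (a b c d : ℝ) (ha : 0 < a) (hb : 0 < b) (hc : 0 < c) (hd : 0 < d)
    (M : Matrix (Fin 2) (Fin 2) ℝ) (hM : M = !![a, b; c, d])
    (hαk : ∀ᶠ k in Filter.atTop,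
      (M^k) 0 0 + (M^k) 1 0 - (M^k) 0 1 - (M^k) 1 1 ≠ 0) :
    Filter.Tendsto
      (fun k : ℕ => ((M^k) 0 1 + (M^k) 1 1) /
        ((M^k) 0 0 + (M^k) 1 0 - (M^k) 0 1 - (M^k) 1 1))
      Filter.atTop
      (nhds (2*b / (a - d - 2*b + Real.sqrt ((a - d)^2 + 4*b*c)))) := by
  have hdisc : 0 < (a - d) ^ 2 + 4 * b * c := by positivity
  have hs_pos := Real.sqrt_pos.2 hdisc
  have hs_sq := Real.sq_sqrt hdisc.le
  generalize √((a - d) ^ 2 + 4 * b * c) = s at hs_pos hs_sq ⊢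
  obtain ⟨htr, hdet, hM00, hM01, hM10, hM11⟩ : M.trace = a + d ∧ M.det = a * d - b * c ∧
      M 0 0 = a ∧ M 0 1 = b ∧ M 1 0 = c ∧ M 1 1 = d := by
    simp [hM, Matrix.trace_fin_two_of, Matrix.det_fin_two_of]
  obtain ⟨P, Q, hdiff, hsum, hprod, hQ⟩ : ∃ P Q : ℝ, P - Q = s ∧ P + Q = M.trace ∧
      P * Q = M.det ∧ Q = (a + d - s) / 2 :=
    ⟨(a + d + s) / 2, _, by ring, by rw [htr]; ring,
      by rw [hdet]; linear_combination (-1 / 4) * hs_sq, rfl⟩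
  have hQP : |Q| < P := abs_lt.2 ⟨by linarith, by linarith⟩
  have hnum := Matrix.sub_mul_pow_apply_add_fin_two hsum hprod
  have hden := Matrix.sub_mul_pow_apply_sub_fin_two hsum hprod
  simp only [hdiff, hM00, hM01, hM10, hM11] at hnum hden
  have hE : a + c - b - d ≠ 0 := fun hE => by
    obtain ⟨k, hk⟩ := hαk.exists
    exact hk (by simpa [hE, hs_pos.ne'] using hden k)
  rw [← div_eq_two_mul_div_of_sq_eq hb.ne' hE hs_sq, ← hQ, sub_eq_add_neg]
  refine ((tendsto_const_nhds.add (tendsto_mul_pow_sub_mul_pow_div hQP)).div_const _).congr' ?_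
  filter_upwards [eventually_ne_atTop 0] with k hk
  rw [eq_comm, ← mul_div_mul_left _ _ hs_pos.ne', hnum, hden]
  field_simp [(pow_sub_pow_pos_of_abs_lt hQP hk).ne']
end

section
/- Let (A₀,A₁) be a pair of 2×2 positive matrices with positive determinants satisfying a₀/c₀ < b₁/d₁ and α_{A₁} < 0 < α_{A₀}. For i ∈ {0,1}, the quantity Δ_i = log( (1+ϱ_{A_i})(b₁/(b₁+d₁)+ϱ_{A_i}) / (ϱ_{A_i}(a₀/(a₀+c₀)+ϱ_{A_i})) ) satisfies Δ₁ < 0 < Δ₀, where ϱ_A = (γ_A−β_A)/(2α_A). -/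
/-!
Since `γ_A ≥ |a - d|`, the numerator of `ϱ_A` is positive, so `ϱ_{A₀} > 0`; and `α_{A₁} < 0` is
exactly what makes `γ_{A₁}² > (a₁ - d₁ + 2c₁)²`, i.e. `ϱ_{A₁} < -1`. With `p = a₀/(a₀+c₀)` and
`q = b₁/(b₁+d₁)` in `[0, 1)`, the argument of the logarithm exceeds `1` exactly when
`q + ϱ (1 + q - p) > 0`, which holds for `ϱ > 0` and fails for `ϱ < -1`.
-/

open Real

/-- The paper's `ϱ_A` for `A = !![a, b; c, d]`. -/
noncomputable def rho (a b c d : ℝ) : ℝ :=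
  (√((a - d) ^ 2 + 4 * b * c) - (a - d - 2 * b)) / (2 * (a + c - b - d))

section rho

variable {a b c d : ℝ}

theorem rho_pos (hb : 0 < b) (hc : 0 ≤ c) (hα : 0 < a + c - b - d) : 0 < rho a b c d := by
  have hγ : |a - d| ≤ √((a - d) ^ 2 + 4 * b * c) := abs_le_sqrt (by nlinarith)
  have : a - d - 2 * b < √((a - d) ^ 2 + 4 * b * c) := by linarith [le_abs_self (a - d)]
  exact div_pos (by linarith) (by linarith)

theorem rho_lt_neg_one (hc : 0 < c) (hα : a + c - b - d < 0) : rho a b c d < -1 := by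
  have hγ : -(a - d + 2 * c) < √((a - d) ^ 2 + 4 * b * c) := lt_sqrt_of_sq_lt (by nlinarith)
  rw [rho, div_lt_iff_of_neg (by linarith)]
  linarith

end rho

section logRatio

variable {p q ϱ : ℝ}

theorem log_ratio_pos (hp : 0 ≤ p) (hp1 : p < 1) (hq : 0 ≤ q) (hϱ : 0 < ϱ) :
    0 < log ((1 + ϱ) * (q + ϱ) / (ϱ * (p + ϱ))) := by
  apply log_pos
  rw [one_lt_div (by positivity)]
  nlinarith [mul_pos hϱ (by linarith : 0 < 1 + q - p)]

theorem log_ratio_neg (hp1 : p < 1) (hq : 0 ≤ q) (hq1 : q < 1) (hϱ : ϱ < -1) :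
    log ((1 + ϱ) * (q + ϱ) / (ϱ * (p + ϱ))) < 0 := by
  have hden : 0 < ϱ * (p + ϱ) := mul_pos_of_neg_of_neg (by linarith) (by linarith)
  apply log_neg (div_pos (mul_pos_of_neg_of_neg (by linarith) (by linarith)) hden)
  rw [div_lt_one hden]
  nlinarith [mul_pos (by linarith : 0 < 1 + q - p) (by linarith : 0 < -1 - ϱ)]

end logRatio

theorem div_add_lt_one {x y : ℝ} (hx : 0 ≤ x) (hy : 0 < y) : x / (x + y) < 1 :=
  (div_lt_one (by linarith)).mpr (by linarith)

theorem stmt_19_general (a₀ b₀ c₀ d₀ a₁ b₁ c₁ d₁ : ℝ)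
    (ha₀ : 0 < a₀) (hb₀ : 0 < b₀) (hc₀ : 0 < c₀)
    (hb₁ : 0 < b₁) (hc₁ : 0 < c₁) (hd₁ : 0 < d₁)
    (hα₁ : a₁ + c₁ - b₁ - d₁ < 0) (hα₀ : 0 < a₀ + c₀ - b₀ - d₀)
    (ϱ₀ ϱ₁ : ℝ)
    (hϱ₀ : ϱ₀ = (Real.sqrt ((a₀ - d₀)^2 + 4*b₀*c₀) - (a₀ - d₀ - 2*b₀)) / (2*(a₀ + c₀ - b₀ - d₀)))
    (hϱ₁ : ϱ₁ = (Real.sqrt ((a₁ - d₁)^2 + 4*b₁*c₁) - (a₁ - d₁ - 2*b₁)) / (2*(a₁ + c₁ - b₁ - d₁))) :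
    Real.log ((1 + ϱ₁) * (b₁/(b₁ + d₁) + ϱ₁) / (ϱ₁ * (a₀/(a₀ + c₀) + ϱ₁))) < 0 ∧
    0 < Real.log ((1 + ϱ₀) * (b₁/(b₁ + d₁) + ϱ₀) / (ϱ₀ * (a₀/(a₀ + c₀) + ϱ₀))) := by
  have hρ₀ : 0 < ϱ₀ := hϱ₀ ▸ rho_pos hb₀ hc₀.le hα₀
  have hρ₁ : ϱ₁ < -1 := hϱ₁ ▸ rho_lt_neg_one hc₁ hα₁
  have hp : 0 ≤ a₀ / (a₀ + c₀) := by positivity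
  have hp1 : a₀ / (a₀ + c₀) < 1 := div_add_lt_one ha₀.le hc₀
  have hq : 0 ≤ b₁ / (b₁ + d₁) := by positivity
  have hq1 : b₁ / (b₁ + d₁) < 1 := div_add_lt_one hb₁.le hd₁
  exact ⟨log_ratio_neg hp1 hq hq1 hρ₁, log_ratio_pos hp hp1 hq hρ₀⟩

theorem stmt_19 (a₀ b₀ c₀ d₀ a₁ b₁ c₁ d₁ : ℝ)
    (ha₀ : 0 < a₀) (hb₀ : 0 < b₀) (hc₀ : 0 < c₀) (hd₀ : 0 < d₀)
    (ha₁ : 0 < a₁) (hb₁ : 0 < b₁) (hc₁ : 0 < c₁) (hd₁ : 0 < d₁)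
    (hdet₀ : 0 < a₀*d₀ - b₀*c₀) (hdet₁ : 0 < a₁*d₁ - b₁*c₁)
    (hord : a₀/c₀ < b₁/d₁)
    (hα₁ : a₁ + c₁ - b₁ - d₁ < 0) (hα₀ : 0 < a₀ + c₀ - b₀ - d₀)
    (ϱ₀ ϱ₁ : ℝ)
    (hϱ₀ : ϱ₀ = (Real.sqrt ((a₀ - d₀)^2 + 4*b₀*c₀) - (a₀ - d₀ - 2*b₀)) / (2*(a₀ + c₀ - b₀ - d₀)))
    (hϱ₁ : ϱ₁ = (Real.sqrt ((a₁ - d₁)^2 + 4*b₁*c₁) - (a₁ - d₁ - 2*b₁)) / (2*(a₁ + c₁ - b₁ - d₁))) :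
    Real.log ((1 + ϱ₁) * (b₁/(b₁ + d₁) + ϱ₁) / (ϱ₁ * (a₀/(a₀ + c₀) + ϱ₁))) < 0 ∧
    0 < Real.log ((1 + ϱ₀) * (b₁/(b₁ + d₁) + ϱ₀) / (ϱ₀ * (a₀/(a₀ + c₀) + ϱ₀))) :=
  stmt_19_general a₀ b₀ c₀ d₀ a₁ b₁ c₁ d₁ ha₀ hb₀ hc₀ hb₁ hc₁ hd₁ hα₁ hα₀ ϱ₀ ϱ₁ hϱ₀ hϱ₁
end
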